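/- Let N ≥ 1, ε > 0, c ∈ ℝ^N with c₁ ≤ c₂ ≤ ⋯ ≤ c_N, and ℓ, u ∈ ℝ with ℓ ≤ c₁ + (u − c_N) and u ≥ c_N. Define the feasible set A = [ℓ, u]^N and the cost f(a) = −Mean(a − c)/(Var(a − c) + ε). If a* ∈ A is a global minimizer of f over A, then max_{i ∈ [N]} a*ᵢ = u. -/

import Mathlib

noncomputable def eMean {N : ℕ} (x : Fin N → ℝ) : ℝ := (∑ i, x i) / N

noncomputable def eVar {N : ℕ} (x : Fin N → ℝ) : ℝ :=
  (∑ i, (x i - eMean x) ^ 2) / N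

noncomputable def cost {N : ℕ} (c : Fin N → ℝ) (ε : ℝ) (a : Fin N → ℝ) : ℝ :=
  -(eMean (fun i => a i - c i)) / (eVar (fun i => a i - c i) + ε)

/-! Translating an allocation by a constant α > 0 leaves the variance of `a - c` unchanged and
raises its mean by α, so it lowers the cost by α / (Var + ε). A minimizer whose largest entry
falls short of `u` could be translated by that gap without leaving the box `[l, u]^N`. -/

lemma eMean_add_const {N : ℕ} (hN : 0 < N) (x : Fin N → ℝ) (α : ℝ) :
    eMean (fun i => x i + α) = eMean x + α := by
  have hN' : (N : ℝ) ≠ 0 := Nat.cast_ne_zero.mpr hN.ne'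
  simp only [eMean, Finset.sum_add_distrib, Finset.sum_const, Finset.card_univ,
    Fintype.card_fin, nsmul_eq_mul]
  field_simp

lemma eVar_add_const {N : ℕ} (x : Fin N → ℝ) (α : ℝ) :
    eVar (fun i => x i + α) = eVar x := by
  rcases N.eq_zero_or_pos with rfl | hN
  · simp [eVar]
  · simp only [eVar, eMean_add_const hN, add_sub_add_right_eq_sub]

lemma eVar_nonneg {N : ℕ} (x : Fin N → ℝ) : 0 ≤ eVar x :=
  div_nonneg (Finset.sum_nonneg fun _ _ => sq_nonneg _) (Nat.cast_nonneg N)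

lemma cost_add_const_lt {N : ℕ} (hN : 0 < N) {ε : ℝ} (hε : 0 < ε) (c a : Fin N → ℝ) {α : ℝ}
    (hα : 0 < α) : cost c ε (fun i => a i + α) < cost c ε a := by
  have hshift : (fun i => a i + α - c i) = fun i => (a i - c i) + α := by
    funext i; ring
  have hden : 0 < eVar (fun i => a i - c i) + ε := by
    linarith [eVar_nonneg fun i => a i - c i]
  rw [cost, cost, hshift, eMean_add_const hN, eVar_add_const]
  gcongr
  linarith

theorem max_allocation_eq_u_general {N : ℕ} (hN : 0 < N) (ε : ℝ) (hε : 0 < ε)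
    (c : Fin N → ℝ) (l u : ℝ)
    (a : Fin N → ℝ) (haA : ∀ i, l ≤ a i ∧ a i ≤ u)
    (hmin : ∀ b : Fin N → ℝ, (∀ i, l ≤ b i ∧ b i ≤ u) → cost c ε a ≤ cost c ε b) :
    Finset.univ.sup' (Finset.univ_nonempty_iff.mpr ⟨⟨0, hN⟩⟩) a = u := by
  set M := Finset.univ.sup' (Finset.univ_nonempty_iff.mpr ⟨⟨0, hN⟩⟩) a
  have ha_le_M : ∀ i, a i ≤ M := fun i => Finset.le_sup' a (Finset.mem_univ i)
  refine le_antisymm (Finset.sup'_le _ _ fun i _ => (haA i).2) (not_lt.mp fun hMu => ?_)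
  have hshift_mem : ∀ i, l ≤ a i + (u - M) ∧ a i + (u - M) ≤ u := fun i =>
    ⟨by linarith [(haA i).1], by linarith [ha_le_M i]⟩
  exact (cost_add_const_lt hN hε c a (sub_pos.mpr hMu)).not_ge (hmin _ hshift_mem)

theorem max_allocation_eq_u {N : ℕ} (hN : 0 < N) (ε : ℝ) (hε : 0 < ε)
    (c : Fin N → ℝ) (hsorted : ∀ i j : Fin N, i ≤ j → c i ≤ c j)
    (l u : ℝ) (hu : c ⟨N - 1, Nat.sub_lt hN one_pos⟩ ≤ u)
    (hl : l ≤ c ⟨0, hN⟩ + (u - c ⟨N - 1, Nat.sub_lt hN one_pos⟩))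
    (a : Fin N → ℝ) (haA : ∀ i, l ≤ a i ∧ a i ≤ u)
    (hmin : ∀ b : Fin N → ℝ, (∀ i, l ≤ b i ∧ b i ≤ u) → cost c ε a ≤ cost c ε b) :
    Finset.univ.sup' (Finset.univ_nonempty_iff.mpr ⟨⟨0, hN⟩⟩) a = u :=
  max_allocation_eq_u_general hN ε hε c l u a haA hmin
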